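/- arXiv:1512.08357 — 2 statements merged into one kernel-verified Lean document; each statement's English description precedes it below -/
import Mathlib

section
/- Suppose α is three times differentiable with α' > 0 on (a,b) and α' satisfies Kummer's equation q(t) − (α'(t))² − (1/2)(α'''(t)/α'(t)) + (3/4)(α''(t)/α'(t))² = 0 on (a,b). Then both u(t) = cos(α(t))/√(α'(t)) and v(t) = sin(α(t))/√(α'(t)) solve y'' + q·y = 0 on (a,b). -/
/-! Write `ρ = (α')^(-1/2)`, so that `u, v = F(α) ρ` with `F = cos, sin` and `F'' = -F`.
Because `α' ρ²` is constant, the terms of `(F(α) ρ)''` involving `F'(α)` cancel, leaving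
`(F(α) ρ)'' = F(α) (ρ'' - α'² ρ)`. A direct computation gives `ρ'' = -½ {α, t} ρ` with `{α, t}` the
Schwarzian derivative, so `(F(α) ρ)'' = -(α'² + ½ {α, t}) F(α) ρ`, and Kummer's equation says
precisely `q = α'² + ½ {α, t}`. -/

open Filter Topology

noncomputable def schwarzian (α : ℝ → ℝ) (t : ℝ) : ℝ :=
  deriv (deriv (deriv α)) t / deriv α t - 3 / 2 * (deriv (deriv α) t / deriv α t) ^ 2

theorem deriv_deriv_comp_mul {F G φ ρ : ℝ → ℝ} {t : ℝ}
    (hF : ∀ x, HasDerivAt F (G x) x) (hG : ∀ x, HasDerivAt G (-F x) x)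
    (hφ : ContDiff ℝ 2 φ)
    (hρ : ∀ᶠ x in 𝓝 t, DifferentiableAt ℝ ρ x) (hρ' : DifferentiableAt ℝ (deriv ρ) t)
    (hρφ : deriv (deriv φ) t * ρ t + 2 * deriv φ t * deriv ρ t = 0) :
    deriv (deriv fun x => F (φ x) * ρ x) t =
      F (φ t) * (deriv (deriv ρ) t - deriv φ t ^ 2 * ρ t) := by
  have hφ₁ : Differentiable ℝ φ := hφ.differentiable (by norm_num)
  have hφ₂ : Differentiable ℝ (deriv φ) := (hφ.deriv' (n := 1)).differentiable one_ne_zero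
  have hFφ x : HasDerivAt (fun y => F (φ y)) (G (φ x) * deriv φ x) x :=
    (hF (φ x)).comp x (hφ₁ x).hasDerivAt
  have hGφ x : HasDerivAt (fun y => G (φ y)) (-F (φ x) * deriv φ x) x :=
    (hG (φ x)).comp x (hφ₁ x).hasDerivAt
  have hd : deriv (fun x => F (φ x) * ρ x) =ᶠ[𝓝 t]
      fun x => G (φ x) * deriv φ x * ρ x + F (φ x) * deriv ρ x :=
    hρ.mono fun x hx => ((hFφ x).mul hx.hasDerivAt).deriv
  rw [hd.deriv_eq, ((((hGφ t).fun_mul (hφ₂ t).hasDerivAt).fun_mul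
    hρ.self_of_nhds.hasDerivAt).fun_add ((hFφ t).fun_mul hρ'.hasDerivAt)).deriv]
  linear_combination G (φ t) * hρφ

theorem HasDerivAt.inv_sqrt {f : ℝ → ℝ} {f' x : ℝ} (hf : HasDerivAt f f' x) (hx : 0 < f x) :
    HasDerivAt (fun y => (√(f y))⁻¹) (-(f' / (2 * f x)) * (√(f x))⁻¹) x := by
  have hs : √(f x) ≠ 0 := (Real.sqrt_pos.2 hx).ne'
  refine ((hf.sqrt hx.ne').inv hs).congr_deriv ?_
  rw [Real.sq_sqrt hx.le]
  field_simp

theorem hasDerivAt_deriv_inv_sqrt {f : ℝ → ℝ} {t : ℝ} (hf : ContDiff ℝ 2 f) (ht : 0 < f t) :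
    HasDerivAt (deriv fun y => (√(f y))⁻¹)
      ((3 / 4 * (deriv f t / f t) ^ 2 - deriv (deriv f) t / (2 * f t)) * (√(f t))⁻¹) t := by
  have hf₁ : Differentiable ℝ f := hf.differentiable (by norm_num)
  have hf₂ : Differentiable ℝ (deriv f) := (hf.deriv' (n := 1)).differentiable one_ne_zero
  have hpos : ∀ᶠ y in 𝓝 t, 0 < f y := hf.continuous.continuousAt.eventually (lt_mem_nhds ht)
  have hd : deriv (fun y => (√(f y))⁻¹) =ᶠ[𝓝 t]
      fun y => -(deriv f y / (2 * f y)) * (√(f y))⁻¹ :=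
    hpos.mono fun y hy => ((hf₁ y).hasDerivAt.inv_sqrt hy).deriv
  refine HasDerivAt.congr_of_eventuallyEq ?_ hd
  refine (((hf₂ t).hasDerivAt.fun_div ((hf₁ t).hasDerivAt.const_mul 2)
    (by positivity)).fun_neg.fun_mul ((hf₁ t).hasDerivAt.inv_sqrt ht)).congr_deriv ?_
  field_simp
  ring

theorem deriv_deriv_comp_div_sqrt_deriv {F G α : ℝ → ℝ} {t : ℝ}
    (hF : ∀ x, HasDerivAt F (G x) x) (hG : ∀ x, HasDerivAt G (-F x) x)
    (hα : ContDiff ℝ 3 α) (ht : 0 < deriv α t) :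
    deriv (deriv fun x => F (α x) / √(deriv α x)) t
      + (deriv α t ^ 2 + schwarzian α t / 2) * (F (α t) / √(deriv α t)) = 0 := by
  have hα' : ContDiff ℝ 2 (deriv α) := hα.deriv'
  have hpos : ∀ᶠ y in 𝓝 t, 0 < deriv α y :=
    hα'.continuous.continuousAt.eventually (lt_mem_nhds ht)
  have hρ : ∀ᶠ y in 𝓝 t, HasDerivAt (fun x => (√(deriv α x))⁻¹)
      (-(deriv (deriv α) y / (2 * deriv α y)) * (√(deriv α y))⁻¹) y :=
    hpos.mono fun y hy => (hα'.differentiable (by norm_num) y).hasDerivAt.inv_sqrt hy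
  have hρ' := hasDerivAt_deriv_inv_sqrt hα' ht
  simp only [div_eq_mul_inv]
  rw [deriv_deriv_comp_mul hF hG (hα.of_le (by norm_num)) (hρ.mono fun y hy => hy.differentiableAt)
    hρ'.differentiableAt, hρ'.deriv, schwarzian]
  · field_simp
    ring
  · rw [hρ.self_of_nhds.deriv]
    field_simp
    ring

theorem stmt2_general (a b : ℝ) (q α : ℝ → ℝ)
    (hα : ContDiff ℝ 3 α)
    (hpos : ∀ t ∈ Set.Ioo a b, 0 < deriv α t)
    (hkummer : ∀ t ∈ Set.Ioo a b,
      q t - (deriv α t) ^ 2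
        - (1 / 2) * (deriv (deriv (deriv α)) t / deriv α t)
        + (3 / 4) * (deriv (deriv α) t / deriv α t) ^ 2 = 0)
    (u v : ℝ → ℝ)
    (hu : ∀ t, u t = Real.cos (α t) / Real.sqrt (deriv α t))
    (hv : ∀ t, v t = Real.sin (α t) / Real.sqrt (deriv α t)) :
    ∀ t ∈ Set.Ioo a b,
      deriv (deriv u) t + q t * u t = 0 ∧
      deriv (deriv v) t + q t * v t = 0 := by
  intro t ht
  obtain rfl : u = _ := funext hu
  obtain rfl : v = _ := funext hv
  have hq : q t = deriv α t ^ 2 + schwarzian α t / 2 := by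
    rw [schwarzian]
    linarith [hkummer t ht]
  rw [hq]
  exact ⟨deriv_deriv_comp_div_sqrt_deriv Real.hasDerivAt_cos
      (fun x => (Real.hasDerivAt_sin x).neg) hα (hpos t ht),
    deriv_deriv_comp_div_sqrt_deriv Real.hasDerivAt_sin
      (fun x => by simpa using Real.hasDerivAt_cos x) hα (hpos t ht)⟩

theorem stmt2 (a b : ℝ) (hab : a < b) (q α : ℝ → ℝ)
    (hq : ContinuousOn q (Set.Ioo a b))
    (hα : ContDiff ℝ 3 α)
    (hpos : ∀ t ∈ Set.Ioo a b, 0 < deriv α t)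
    (hkummer : ∀ t ∈ Set.Ioo a b,
      q t - (deriv α t) ^ 2
        - (1 / 2) * (deriv (deriv (deriv α)) t / deriv α t)
        + (3 / 4) * (deriv (deriv α) t / deriv α t) ^ 2 = 0)
    (u v : ℝ → ℝ)
    (hu : ∀ t, u t = Real.cos (α t) / Real.sqrt (deriv α t))
    (hv : ∀ t, v t = Real.sin (α t) / Real.sqrt (deriv α t)) :
    ∀ t ∈ Set.Ioo a b,
      deriv (deriv u) t + q t * u t = 0 ∧
      deriv (deriv v) t + q t * v t = 0 :=
  stmt2_general a b q α hα hpos hkummer u v hu hv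
end

section
/- Suppose y(t) = d₁ sin(α(t) + d₂)/√(α'(t)) on [a,b] with d₁ ≠ 0, α strictly increasing with α' > 0, and 0 < d₂ ≤ π. Then the number of roots of y in [a,b] equals the number of integers k with α(a) + d₂ ≤ kπ ≤ α(b) + d₂, which is ⌊(α(b)+d₂)/π⌋ − ⌈(α(a)+d₂)/π⌉ + 1 when this quantity is nonnegative. -/
/-! Since `√(α' t) > 0`, the roots of `y` are the `t` with `α t + d₂ ∈ πℤ`. The map
`t ↦ α t + d₂` is a continuous strictly increasing bijection of `[a, b]` onto
`[α a + d₂, α b + d₂]`, so these roots correspond one-to-one to the integers `k` with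
`kπ ∈ [α a + d₂, α b + d₂]`, i.e. to `k ∈ [⌈(α a + d₂)/π⌉, ⌊(α b + d₂)/π⌋]`. -/

open Set Real

theorem StrictMonoOn.ncard_setOf_mem_Icc_apply_mem {f : ℝ → ℝ} {a b : ℝ} (hab : a ≤ b)
    (hf : ContinuousOn f (Icc a b)) (hmono : StrictMonoOn f (Icc a b)) (s : Set ℝ) :
    {t ∈ Icc a b | f t ∈ s}.ncard = (s ∩ Icc (f a) (f b)).ncard := by
  have himage : f '' {t ∈ Icc a b | f t ∈ s} = s ∩ Icc (f a) (f b) := by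
    rw [← hf.image_Icc_of_monotoneOn hab hmono.monotoneOn, inter_comm]
    exact image_inter_preimage f (Icc a b) s
  rw [← himage, (hmono.injOn.mono (sep_subset _ _)).ncard_image]

theorem ncard_range_intCast_mul_inter_Icc {c : ℝ} (hc : c ≠ 0) (u v : ℝ) :
    (range (fun k : ℤ => k * c) ∩ Icc u v).ncard = {k : ℤ | u ≤ k * c ∧ k * c ≤ v}.ncard := by
  have hinj : Function.Injective (fun k : ℤ => (k : ℝ) * c) :=
    (mul_left_injective₀ hc).comp Int.cast_injective
  rw [← image_preimage_eq_range_inter, ncard_image_of_injective _ hinj]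
  rfl

theorem setOf_le_intCast_mul_le_eq_Icc {c : ℝ} (hc : 0 < c) (u v : ℝ) :
    {k : ℤ | u ≤ k * c ∧ k * c ≤ v} = Icc ⌈u / c⌉ ⌊v / c⌋ := by
  ext k
  simp only [mem_ofPred_eq, mem_Icc, Int.ceil_le, Int.le_floor, div_le_iff₀ hc, le_div_iff₀ hc]

theorem Int.ncard_Icc (m n : ℤ) : (Icc m n).ncard = (n + 1 - m).toNat := by
  rw [← Finset.coe_Icc, ncard_coe_finset, Int.card_Icc]

theorem Real.setOf_sin_eq_zero : {x | sin x = 0} = range (fun k : ℤ => k * π) := by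
  ext x
  simp only [mem_ofPred_eq, mem_range, sin_eq_zero_iff]

theorem stmt19_general (a b : ℝ) (hab : a < b) (α y : ℝ → ℝ) (d₁ d₂ : ℝ)
    (hd₁ : d₁ ≠ 0)
    (hα : ContDiff ℝ 1 α)
    (hmono : StrictMonoOn α (Set.Icc a b))
    (hpos : ∀ t ∈ Set.Icc a b, 0 < deriv α t)
    (hy : ∀ t, y t = d₁ * Real.sin (α t + d₂) / Real.sqrt (deriv α t)) :
    {t ∈ Set.Icc a b | y t = 0}.ncard =
      {k : ℤ | α a + d₂ ≤ k * Real.pi ∧ k * Real.pi ≤ α b + d₂}.ncard ∧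
    (0 ≤ ⌊(α b + d₂) / Real.pi⌋ - ⌈(α a + d₂) / Real.pi⌉ + 1 →
      ({t ∈ Set.Icc a b | y t = 0}.ncard : ℤ) =
        ⌊(α b + d₂) / Real.pi⌋ - ⌈(α a + d₂) / Real.pi⌉ + 1) := by
  have hroots : {t ∈ Icc a b | y t = 0} = {t ∈ Icc a b | α t + d₂ ∈ {x | sin x = 0}} := by
    ext t
    refine and_congr_right fun ht => ?_
    rw [hy, div_eq_zero_iff, sqrt_eq_zero', mul_eq_zero]
    simp only [hd₁, false_or, (hpos t ht).not_ge, or_false, mem_ofPred_eq]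
  have hcount : {t ∈ Icc a b | y t = 0}.ncard =
      {k : ℤ | α a + d₂ ≤ k * π ∧ k * π ≤ α b + d₂}.ncard := by
    rw [hroots, StrictMonoOn.ncard_setOf_mem_Icc_apply_mem (f := fun t => α t + d₂) hab.le
      (hα.continuous.add continuous_const).continuousOn (hmono.add_const d₂), setOf_sin_eq_zero,
      ncard_range_intCast_mul_inter_Icc pi_ne_zero]
  refine ⟨hcount, fun h => ?_⟩
  rw [hcount, setOf_le_intCast_mul_le_eq_Icc pi_pos, Int.ncard_Icc]
  omega

theorem stmt19 (a b : ℝ) (hab : a < b) (α y : ℝ → ℝ) (d₁ d₂ : ℝ)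
    (hd₁ : d₁ ≠ 0) (hd₂ : 0 < d₂ ∧ d₂ ≤ Real.pi)
    (hα : ContDiff ℝ 1 α)
    (hmono : StrictMonoOn α (Set.Icc a b))
    (hpos : ∀ t ∈ Set.Icc a b, 0 < deriv α t)
    (hy : ∀ t, y t = d₁ * Real.sin (α t + d₂) / Real.sqrt (deriv α t)) :
    {t ∈ Set.Icc a b | y t = 0}.ncard =
      {k : ℤ | α a + d₂ ≤ k * Real.pi ∧ k * Real.pi ≤ α b + d₂}.ncard ∧
    (0 ≤ ⌊(α b + d₂) / Real.pi⌋ - ⌈(α a + d₂) / Real.pi⌉ + 1 →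
      ({t ∈ Set.Icc a b | y t = 0}.ncard : ℤ) =
        ⌊(α b + d₂) / Real.pi⌋ - ⌈(α a + d₂) / Real.pi⌉ + 1) :=
  stmt19_general a b hab α y d₁ d₂ hd₁ hα hmono hpos hy
end
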